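/- For every integer L ≥ 2, every β ≥ 0 and every ε with 0 < ε ≤ 1/2, the restricted partition function Z^{dis}(β,ε) = ∫_{\{every bond ε-disordered\}} exp(−β H_ε(φ)) dμ(φ) satisfies Z^{dis}(β,ε) ≤ 1, and consequently (Z^{dis}(β,ε) / Z_Λ(β,ε))^{1/(2L²)} ≤ (2/ε)^{1/2} · exp(−β). -/

import Mathlib

open MeasureTheory Real

/-- The site space: the discrete torus of side `L`. -/
abbrev Torus (L : ℕ) := ZMod L × ZMod L

/-- A configuration of the toy model: one circle-valued spin per site. -/
abbrev Config (L : ℕ) := Torus L → AddCircle (1 : ℝ)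

/-- The two unit coordinate vectors `e₁ = (1,0)` and `e₂ = (0,1)`. -/
def coordVec (L : ℕ) : Fin 2 → Torus L
  | 0 => (1, 0)
  | 1 => (0, 1)

/-- The product of normalized Haar measures on the spins. -/
noncomputable def toyMeasure (L : ℕ) [NeZero L] : Measure (Config L) :=
  Measure.pi fun _ => (AddCircle.haarAddCircle : Measure (AddCircle (1 : ℝ)))

/-- A bond `(x, x + eᵢ)` of the configuration `φ` is `ε`-ordered when
`‖φ x - φ (x + eᵢ)‖ ≤ ε/2`, where `‖·‖` is the quotient norm on `ℝ/ℤ`. -/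
def IsOrderedBond (L : ℕ) [NeZero L] (ε : ℝ) (φ : Config L) (x : Torus L) (i : Fin 2) : Prop :=
  ‖φ x - φ (x + coordVec L i)‖ ≤ ε / 2

noncomputable instance (L : ℕ) [NeZero L] (ε : ℝ) (φ : Config L) (x : Torus L) (i : Fin 2) :
    Decidable (IsOrderedBond L ε φ x i) :=
  Real.decidableLE _ _

/-- The toy Hamiltonian: minus the number of `ε`-ordered bonds. -/
noncomputable def toyH (L : ℕ) [NeZero L] (ε : ℝ) (φ : Config L) : ℝ :=
  -(∑ x : Torus L, ∑ i : Fin 2, if IsOrderedBond L ε φ x i then (1 : ℝ) else 0)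

/-- The toy-model partition function. -/
noncomputable def toyZ (L : ℕ) [NeZero L] (β ε : ℝ) : ℝ :=
  ∫ φ, Real.exp (-β * toyH L ε φ) ∂(toyMeasure L)

/-- The disordered-restricted partition function `Z^{dis}`: the integral of the
Boltzmann weight over the configurations all of whose bonds are `ε`-disordered. -/
noncomputable def toyZdis (L : ℕ) [NeZero L] (β ε : ℝ) : ℝ :=
  ∫ φ in {φ : Config L | ∀ x : Torus L, ∀ i : Fin 2, ¬ IsOrderedBond L ε φ x i},
    Real.exp (-β * toyH L ε φ) ∂(toyMeasure L)

/-!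
On the event that every bond is disordered the Hamiltonian vanishes, so `Z^{dis}` is at most the
probability of that event. Conversely, when every spin lies within `ε/4` of `0` every bond is
ordered; this product event has probability `(ε/2)^{L²}` and carries the maximal weight
`exp(2βL²)`, so `Z ≥ ((ε/2) e^{2β})^{L²}`. Dividing and taking the `2L²`-th root gives the bound.
-/

theorem AddCircle.haarAddCircle_closedBall (x : AddCircle (1 : ℝ)) (r : ℝ) :
    AddCircle.haarAddCircle (Metric.closedBall x r) = ENNReal.ofReal (min 1 (2 * r)) := by
  have h := AddCircle.volume_closedBall (T := 1) (x := x) r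
  rwa [AddCircle.volume_eq_smul_haarAddCircle, Measure.smul_apply, smul_eq_mul,
    ENNReal.ofReal_one, one_mul] at h

section ToyModel

variable {L : ℕ} [NeZero L] {β ε : ℝ}

instance : IsProbabilityMeasure (toyMeasure L) := by
  unfold toyMeasure; infer_instance

theorem measurableSet_isOrderedBond (x : Torus L) (i : Fin 2) :
    MeasurableSet {φ : Config L | IsOrderedBond L ε φ x i} :=
  measurableSet_le (by fun_prop) measurable_const

theorem measurable_toyH : Measurable (toyH L ε) :=
  (Finset.measurable_sum _ fun x _ => Finset.measurable_sum _ fun i _ =>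
    (measurable_const.ite (measurableSet_isOrderedBond x i) measurable_const)).neg

theorem toyH_eq_zero_of_forall_not_isOrderedBond {φ : Config L}
    (hφ : ∀ x i, ¬ IsOrderedBond L ε φ x i) : toyH L ε φ = 0 := by
  simp [toyH, hφ]

theorem toyH_eq_of_forall_isOrderedBond {φ : Config L} (hφ : ∀ x i, IsOrderedBond L ε φ x i) :
    toyH L ε φ = -(2 * (L ^ 2 : ℕ)) := by
  simp [toyH, hφ, ZMod.card]
  ring

theorem abs_toyH_le (φ : Config L) : |toyH L ε φ| ≤ 2 * (L ^ 2 : ℕ) := by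
  have hcount : ∑ x : Torus L, ∑ i : Fin 2, (if IsOrderedBond L ε φ x i then (1 : ℝ) else 0) ≤
      ∑ _x : Torus L, ∑ _i : Fin 2, (1 : ℝ) :=
    Finset.sum_le_sum fun x _ => Finset.sum_le_sum fun i _ => by split_ifs <;> norm_num
  have hnonneg : 0 ≤ ∑ x : Torus L, ∑ i : Fin 2,
      (if IsOrderedBond L ε φ x i then (1 : ℝ) else 0) :=
    Finset.sum_nonneg fun x _ => Finset.sum_nonneg fun i _ => by split_ifs <;> norm_num
  simp only [Finset.sum_const, Finset.card_univ, Fintype.card_prod, Fintype.card_fin,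
    nsmul_eq_mul, mul_one, Nat.cast_mul, ZMod.card] at hcount
  rw [toyH, abs_neg, abs_of_nonneg hnonneg]
  push_cast at hcount ⊢
  linarith

theorem integrable_exp_toyH : Integrable (fun φ => exp (-β * toyH L ε φ)) (toyMeasure L) := by
  refine .of_bound (measurable_toyH.const_mul _).exp.aestronglyMeasurable
    (exp (|β| * (2 * (L ^ 2 : ℕ)))) (ae_of_all _ fun φ => ?_)
  rw [norm_of_nonneg (exp_pos _).le, exp_le_exp, neg_mul]
  calc -(β * toyH L ε φ) ≤ |β * toyH L ε φ| := neg_le_abs _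
    _ = |β| * |toyH L ε φ| := abs_mul _ _
    _ ≤ |β| * (2 * (L ^ 2 : ℕ)) := mul_le_mul_of_nonneg_left (abs_toyH_le φ) (abs_nonneg β)

theorem toyZdis_nonneg : 0 ≤ toyZdis L β ε :=
  integral_nonneg fun _ => (exp_pos _).le

theorem toyZdis_le_one : toyZdis L β ε ≤ 1 := by
  let D := {φ : Config L | ∀ x i, ¬ IsOrderedBond L ε φ x i}
  have hD : MeasurableSet D := by
    simp only [D, Set.ofPred_forall]
    exact .iInter fun x => .iInter fun i => (measurableSet_isOrderedBond x i).compl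
  calc toyZdis L β ε = ∫ _ in D, (1 : ℝ) ∂toyMeasure L :=
        setIntegral_congr_fun hD fun φ hφ => by
          rw [toyH_eq_zero_of_forall_not_isOrderedBond hφ, mul_zero, exp_zero]
    _ = (toyMeasure L).real D := by rw [setIntegral_const, smul_eq_mul, mul_one]
    _ ≤ 1 := measureReal_le_one

theorem pow_le_toyZ (hε : 0 ≤ ε) (hε' : ε ≤ 2) :
    (ε / 2 * exp (2 * β)) ^ (L ^ 2) ≤ toyZ L β ε := by
  let B : Set (Config L) := Set.univ.pi fun _ => Metric.closedBall 0 (ε / 4)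
  have hB : MeasurableSet B := .univ_pi fun _ => measurableSet_closedBall
  have hμB : toyMeasure L B = ENNReal.ofReal (ε / 2) ^ (L ^ 2) := by
    rw [toyMeasure, Measure.pi_pi, Finset.prod_congr rfl fun _ _ =>
      AddCircle.haarAddCircle_closedBall 0 (ε / 4), min_eq_right (by linarith),
      Finset.prod_const, Finset.card_univ, Fintype.card_prod, ZMod.card, ← pow_two]
    ring_nf
  have hordered : ∀ φ ∈ B, ∀ x i, IsOrderedBond L ε φ x i := fun φ hφ x i =>
    calc ‖φ x - φ (x + coordVec L i)‖ ≤ ‖φ x‖ + ‖φ (x + coordVec L i)‖ := norm_sub_le _ _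
      _ ≤ ε / 4 + ε / 4 := add_le_add (mem_closedBall_zero_iff.mp (hφ x trivial))
          (mem_closedBall_zero_iff.mp (hφ _ trivial))
      _ = ε / 2 := by ring
  calc (ε / 2 * exp (2 * β)) ^ (L ^ 2) = ∫ _ in B, exp (2 * β) ^ (L ^ 2) ∂toyMeasure L := by
        rw [setIntegral_const, measureReal_def, hμB, ENNReal.toReal_pow,
          ENNReal.toReal_ofReal (by linarith), smul_eq_mul, mul_pow]
    _ = ∫ φ in B, exp (-β * toyH L ε φ) ∂toyMeasure L :=
        setIntegral_congr_fun hB fun φ hφ => by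
          rw [toyH_eq_of_forall_isOrderedBond (hordered φ hφ), ← exp_nat_mul]
          ring_nf
    _ ≤ toyZ L β ε :=
        setIntegral_le_integral integrable_exp_toyH (ae_of_all _ fun _ => (exp_pos _).le)

end ToyModel

/-- `Z^{dis} ≤ 1` and the per-bond chessboard ratio bound
`(Z^{dis}/Z)^{1/(2L²)} ≤ (2/ε)^{1/2}·exp(−β)`. -/
theorem toy_Zdis_upper_bound (L : ℕ) (hL : 2 ≤ L) (β ε : ℝ)
    (hε : 0 < ε) (hε' : ε ≤ 1 / 2) :
    haveI : NeZero L := ⟨by omega⟩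
    toyZdis L β ε ≤ 1 ∧
    (toyZdis L β ε / toyZ L β ε) ^ ((2 * (L : ℝ) ^ 2)⁻¹) ≤
      (2 / ε) ^ ((1 : ℝ) / 2) * Real.exp (-β) := by
  have : NeZero L := ⟨by omega⟩
  set y := ε / 2 * exp (2 * β)
  have hy : 0 < y := by positivity
  have hZ : y ^ (L ^ 2) ≤ toyZ L β ε := pow_le_toyZ hε.le (by linarith)
  have hratio : toyZdis L β ε / toyZ L β ε ≤ y⁻¹ ^ (L ^ 2) := by
    rw [inv_pow, ← one_div]
    exact div_le_div₀ zero_le_one toyZdis_le_one (by positivity) hZ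
  refine ⟨toyZdis_le_one, ?_⟩
  calc (toyZdis L β ε / toyZ L β ε) ^ ((2 * (L : ℝ) ^ 2)⁻¹)
      ≤ (y⁻¹ ^ (L ^ 2)) ^ ((2 * (L : ℝ) ^ 2)⁻¹) :=
        rpow_le_rpow (div_nonneg toyZdis_nonneg ((pow_pos hy _).trans_le hZ).le) hratio
          (by positivity)
    _ = ((y⁻¹ ^ (L ^ 2)) ^ (((L ^ 2 : ℕ) : ℝ)⁻¹)) ^ ((1 : ℝ) / 2) := by
        rw [← rpow_mul (by positivity)]
        push_cast
        ring_nf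
    _ = (2 / ε) ^ ((1 : ℝ) / 2) * exp (-β) := by
        rw [pow_rpow_inv_natCast (by positivity) (pow_ne_zero 2 (NeZero.ne L)), mul_inv, inv_div, ← exp_neg,
          mul_rpow (by positivity) (exp_pos _).le, ← exp_mul]
        ring_nf
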